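/- arXiv:2604.26688 — 3 statements merged into one kernel-verified Lean document; each statement's English description precedes it below -/
import Mathlib

section
/- Correctness of the belief-state DFA (Theorem 1 of the paper): let φ be an LTLf formula over P with P = P_o ⊎ P_u, and let A^B_φ be the belief-state DFA of φ. Then for every observable word σ_o ∈ (B^{P_o})^+: σ_o ∈ L(A^B_φ) if and only if every word σ ∈ (B^P)^+ with |σ| = |σ_o| and σ|_{P_o} = σ_o satisfies σ,0 ⊨ φ. -/
/-- LTLf formulas over atomic propositions `P`.  `next` is the weak next `X`,
`snext` is the strong next `X[!]`, `fin` is `F`, `glob` is `G`,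
`untl` is `U` and `rels` is `R`. -/
inductive LTLf (P : Type) : Type
  | tt : LTLf P
  | ff : LTLf P
  | atom : P → LTLf P
  | not : LTLf P → LTLf P
  | and : LTLf P → LTLf P → LTLf P
  | or : LTLf P → LTLf P → LTLf P
  | next : LTLf P → LTLf P
  | snext : LTLf P → LTLf P
  | fin : LTLf P → LTLf P
  | glob : LTLf P → LTLf P
  | untl : LTLf P → LTLf P → LTLf P
  | rels : LTLf P → LTLf P → LTLf P

namespace LTLf

variable {P O U : Type}

/-- Standard LTLf satisfaction `σ, i ⊨ φ` on finite traces.  A word is a list of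
Boolean assignments; positions out of range never occur in the statements. -/
def Sat (σ : List (P → Bool)) : ℕ → LTLf P → Prop
  | _, tt => True
  | _, ff => False
  | i, atom p => (σ.getD i (fun _ => false)) p = true
  | i, not φ => ¬ Sat σ i φ
  | i, and φ ψ => Sat σ i φ ∧ Sat σ i ψ
  | i, or φ ψ => Sat σ i φ ∨ Sat σ i ψ
  | i, next φ => i + 1 = σ.length ∨ Sat σ (i + 1) φ
  | i, snext φ => i + 1 < σ.length ∧ Sat σ (i + 1) φ
  | i, fin φ => ∃ j, i ≤ j ∧ j < σ.length ∧ Sat σ j φ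
  | i, glob φ => ∀ j, i ≤ j → j < σ.length → Sat σ j φ
  | i, untl φ ψ =>
      ∃ j, i ≤ j ∧ j < σ.length ∧ Sat σ j ψ ∧ ∀ k, i ≤ k → k < j → Sat σ k φ
  | i, rels φ ψ =>
      ∀ j, i ≤ j → j < σ.length → (Sat σ j ψ ∨ ∃ k, i ≤ k ∧ k < j ∧ Sat σ k φ)

/-- Boolean connectives lifted componentwise to (formula, flag) pairs. -/
def pnot (x : LTLf P × Bool) : LTLf P × Bool := (not x.1, !x.2)

def pand (x y : LTLf P × Bool) : LTLf P × Bool := (and x.1 y.1, x.2 && y.2)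

def por (x y : LTLf P × Bool) : LTLf P × Bool := (or x.1 y.1, x.2 || y.2)

/-- Formula progression: given a formula and an assignment, return the
progressed formula together with the acceptance flag. -/
def fp (w : P → Bool) : LTLf P → LTLf P × Bool
  | tt => (tt, true)
  | ff => (ff, false)
  | atom p => if w p = true then (tt, true) else (ff, false)
  | not φ => pnot (fp w φ)
  | and φ ψ => pand (fp w φ) (fp w ψ)
  | or φ ψ => por (fp w φ) (fp w ψ)
  | next φ => (φ, true)
  | snext φ => (φ, false)
  | fin φ => por (fp w φ) (fin φ, false)
  | glob φ => pand (fp w φ) (glob φ, true)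
  | untl φ ψ => por (fp w ψ) (pand (fp w φ) (untl φ ψ, false))
  | rels φ ψ => pand (fp w ψ) (por (fp w φ) (rels φ ψ, true))

/-- Progression iterated over a nonempty word `w :: ws`. -/
def fpWord (φ : LTLf P) (w : P → Bool) : List (P → Bool) → LTLf P × Bool
  | [] => fp w φ
  | w' :: ws => fpWord (fp w φ).1 w' ws

/-- Propositional (Boolean) evaluation of a formula, treating atomic
propositions and maximal temporal subformulas as Boolean variables valued
by `v`. -/
def propEval (v : LTLf P → Bool) : LTLf P → Bool
  | tt => true
  | ff => false
  | not φ => !(propEval v φ)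
  | and φ ψ => propEval v φ && propEval v ψ
  | or φ ψ => propEval v φ || propEval v ψ
  | φ => v φ

/-- Propositional equivalence `φ ∼ ψ`. -/
def propEquiv (φ ψ : LTLf P) : Prop :=
  ∀ v : LTLf P → Bool, propEval v φ = propEval v ψ

/-- The `∼`-equivalence class `[φ]_∼` of a formula. -/
def pcls (φ : LTLf P) : Set (LTLf P) := { ψ | propEquiv φ ψ }

/-- The set of subformulas of a formula. -/
def sf : LTLf P → Set (LTLf P)
  | tt => {tt}
  | ff => {ff}
  | atom p => {atom p}
  | not φ => insert (not φ) (sf φ)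
  | and φ ψ => insert (and φ ψ) (sf φ ∪ sf ψ)
  | or φ ψ => insert (or φ ψ) (sf φ ∪ sf ψ)
  | next φ => insert (next φ) (sf φ)
  | snext φ => insert (snext φ) (sf φ)
  | fin φ => insert (fin φ) (sf φ)
  | glob φ => insert (glob φ) (sf φ)
  | untl φ ψ => insert (untl φ ψ) (sf φ ∪ sf ψ)
  | rels φ ψ => insert (rels φ ψ) (sf φ ∪ sf ψ)

/-- The Boolean closure of a set of formulas: the smallest set containing
`X ∪ {tt, ff}` and closed under `¬`, `∧`, `∨`. -/
inductive BC {P : Type} (X : Set (LTLf P)) : LTLf P → Prop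
  | base {φ : LTLf P} : φ ∈ X → BC X φ
  | tt' : BC X LTLf.tt
  | ff' : BC X LTLf.ff
  | not' {φ : LTLf P} : BC X φ → BC X (LTLf.not φ)
  | and' {φ ψ : LTLf P} : BC X φ → BC X ψ → BC X (LTLf.and φ ψ)
  | or' {φ ψ : LTLf P} : BC X φ → BC X ψ → BC X (LTLf.or φ ψ)

/-- A formula which is an atomic proposition or has a temporal operator as its
outermost connective. -/
def isAtomicOrTemporal : LTLf P → Prop
  | atom _ => True
  | next _ => True
  | snext _ => True
  | fin _ => True
  | glob _ => True
  | untl _ _ => True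
  | rels _ _ => True
  | _ => False

/-- Observable progression: progress with respect to an observable assignment
`wo ∈ B^{P_o}`, taking the (componentwise) conjunction of `fp` over all full
assignments compatible with `wo` (i.e. over all assignments of the
unobservable variables `U`). -/
noncomputable def fpObs [Fintype U] [DecidableEq U] (ψ : LTLf (O ⊕ U)) (wo : O → Bool) :
    LTLf (O ⊕ U) × Bool :=
  (((Finset.univ : Finset (U → Bool)).toList.map
      (fun wu => fp (Sum.elim wo wu) ψ)).foldr pand (tt, true))

/-- Observable progression iterated over a nonempty observable word `wo :: wos`. -/
noncomputable def fpObsWord [Fintype U] [DecidableEq U] (φ : LTLf (O ⊕ U)) (wo : O → Bool) :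
    List (O → Bool) → LTLf (O ⊕ U) × Bool
  | [] => fpObs φ wo
  | w :: ws => fpObsWord (fpObs φ wo).1 w ws

/-- The run of the belief-state construction: `runB φ σo t` is the belief state
`s_t` reached after observably progressing `φ` along the first `t` letters of `σo`. -/
noncomputable def runB [Fintype U] [DecidableEq U] (φ : LTLf (O ⊕ U)) (σo : List (O → Bool)) :
    ℕ → LTLf (O ⊕ U)
  | 0 => φ
  | t + 1 => (fpObs (runB φ σo t) (σo.getD t (fun _ => false))).1

end LTLf

namespace LTLf
variable {P O U : Type}

theorem sat_shift (w : P → Bool) : ∀ (ψ : LTLf P) (σ : List (P → Bool)) (i : ℕ),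
    Sat (w :: σ) (i + 1) ψ ↔ Sat σ i ψ := by
  intro ψ
  induction ψ with
  | tt => intro σ i; simp [Sat]
  | ff => intro σ i; simp [Sat]
  | atom p => intro σ i; simp [Sat]
  | not φ ih => intro σ i; simp [Sat, ih]
  | and φ ψ ih1 ih2 => intro σ i; simp [Sat, ih1, ih2]
  | or φ ψ ih1 ih2 => intro σ i; simp [Sat, ih1, ih2]
  | next φ ih =>
    intro σ i
    simp only [Sat, ih, List.length_cons]
    constructor <;> rintro (h | h)
    · left; omega
    · right; exact h
    · left; omega
    · right; exact h
  | snext φ ih =>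
    intro σ i
    simp only [Sat, ih, List.length_cons]
    constructor <;> rintro ⟨h1, h2⟩ <;> exact ⟨by omega, h2⟩
  | fin φ ih =>
    intro σ i
    simp only [Sat, List.length_cons]
    constructor
    · rintro ⟨j, h1, h2, h3⟩
      obtain ⟨j', rfl⟩ : ∃ j', j = j' + 1 := ⟨j - 1, by omega⟩
      exact ⟨j', by omega, by omega, (ih σ j').mp h3⟩
    · rintro ⟨j, h1, h2, h3⟩
      exact ⟨j + 1, by omega, by omega, (ih σ j).mpr h3⟩
  | glob φ ih =>
    intro σ i
    simp only [Sat, List.length_cons]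
    constructor
    · intro h j h1 h2
      exact (ih σ j).mp (h (j + 1) (by omega) (by omega))
    · intro h j h1 h2
      obtain ⟨j', rfl⟩ : ∃ j', j = j' + 1 := ⟨j - 1, by omega⟩
      exact (ih σ j').mpr (h j' (by omega) (by omega))
  | untl φ ψ ih1 ih2 =>
    intro σ i
    simp only [Sat, List.length_cons]
    constructor
    · rintro ⟨j, h1, h2, h3, h4⟩
      obtain ⟨j', rfl⟩ : ∃ j', j = j' + 1 := ⟨j - 1, by omega⟩
      refine ⟨j', by omega, by omega, (ih2 σ j').mp h3, fun k hk1 hk2 => ?_⟩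
      exact (ih1 σ k).mp (h4 (k + 1) (by omega) (by omega))
    · rintro ⟨j, h1, h2, h3, h4⟩
      refine ⟨j + 1, by omega, by omega, (ih2 σ j).mpr h3, fun k hk1 hk2 => ?_⟩
      obtain ⟨k', rfl⟩ : ∃ k', k = k' + 1 := ⟨k - 1, by omega⟩
      exact (ih1 σ k').mpr (h4 k' (by omega) (by omega))
  | rels φ ψ ih1 ih2 =>
    intro σ i
    simp only [Sat, List.length_cons]
    constructor
    · intro h j h1 h2
      rcases h (j + 1) (by omega) (by omega) with h3 | ⟨k, hk1, hk2, hk3⟩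
      · exact Or.inl ((ih2 σ j).mp h3)
      · obtain ⟨k', rfl⟩ : ∃ k', k = k' + 1 := ⟨k - 1, by omega⟩
        exact Or.inr ⟨k', by omega, by omega, (ih1 σ k').mp hk3⟩
    · intro h j h1 h2
      obtain ⟨j', rfl⟩ : ∃ j', j = j' + 1 := ⟨j - 1, by omega⟩
      rcases h j' (by omega) (by omega) with h3 | ⟨k, hk1, hk2, hk3⟩
      · exact Or.inl ((ih2 σ j').mpr h3)
      · exact Or.inr ⟨k + 1, by omega, by omega, (ih1 σ k).mpr hk3⟩

theorem fp_flag : ∀ (φ : LTLf P) (w : P → Bool),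
    ((fp w φ).2 = true ↔ Sat [w] 0 φ) := by
  intro φ
  induction φ with
  | tt => intro w; simp [fp, Sat]
  | ff => intro w; simp [fp, Sat]
  | atom p =>
    intro w
    by_cases h : w p = true <;> simp [fp, h, Sat]
  | not φ ih => intro w; simp [fp, pnot, Sat, ← ih]
  | and φ ψ ih1 ih2 => intro w; simp [fp, pand, Sat, ih1, ih2]
  | or φ ψ ih1 ih2 => intro w; simp [fp, por, Sat, ih1, ih2]
  | next φ ih => intro w; simp [fp, Sat]
  | snext φ ih => intro w; simp [fp, Sat]
  | fin φ ih =>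
    intro w
    simp only [fp, por, Bool.or_false, ih, Sat, List.length_cons, List.length_nil]
    constructor
    · intro h; exact ⟨0, by omega, by omega, h⟩
    · rintro ⟨j, h1, h2, h3⟩
      obtain rfl : j = 0 := by omega
      exact h3
  | glob φ ih =>
    intro w
    simp only [fp, pand, Bool.and_true, ih, Sat, List.length_cons, List.length_nil]
    constructor
    · intro h j h1 h2
      obtain rfl : j = 0 := by omega
      exact h
    · intro h; exact h 0 (by omega) (by omega)
  | untl φ ψ ih1 ih2 =>
    intro w
    simp only [fp, por, pand, Bool.and_false, Bool.or_false, ih2, Sat,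
      List.length_cons, List.length_nil]
    constructor
    · intro h
      exact ⟨0, by omega, by omega, h, fun k h1 h2 => by omega⟩
    · rintro ⟨j, h1, h2, h3, _⟩
      obtain rfl : j = 0 := by omega
      exact h3
  | rels φ ψ ih1 ih2 =>
    intro w
    simp only [fp, pand, por, Bool.or_true, Bool.and_true, ih2, Sat,
      List.length_cons, List.length_nil]
    constructor
    · intro h j h1 h2
      obtain rfl : j = 0 := by omega
      exact Or.inl h
    · intro h
      rcases h 0 (by omega) (by omega) with h | ⟨k, h1, h2, _⟩
      · exact h
      · omega

theorem fp_form : ∀ (φ : LTLf P) (w : P → Bool) (σ : List (P → Bool)), σ ≠ [] →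
    (Sat σ 0 (fp w φ).1 ↔ Sat (w :: σ) 0 φ) := by
  intro φ
  induction φ with
  | tt => intro w σ hσ; simp [fp, Sat]
  | ff => intro w σ hσ; simp [fp, Sat]
  | atom p =>
    intro w σ hσ
    by_cases h : w p = true <;> simp [fp, h, Sat, List.getD_cons_zero]
  | not φ ih => intro w σ hσ; simp [fp, pnot, Sat, ih _ _ hσ]
  | and φ ψ ih1 ih2 => intro w σ hσ; simp [fp, pand, Sat, ih1 _ _ hσ, ih2 _ _ hσ]
  | or φ ψ ih1 ih2 => intro w σ hσ; simp [fp, por, Sat, ih1 _ _ hσ, ih2 _ _ hσ]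
  | next φ ih =>
    intro w σ hσ
    have hlen : 0 < σ.length := List.length_pos_iff.mpr hσ
    simp only [fp, Sat, List.length_cons, sat_shift]
    constructor
    · intro h; exact Or.inr h
    · rintro (h | h)
      · omega
      · exact h
  | snext φ ih =>
    intro w σ hσ
    have hlen : 0 < σ.length := List.length_pos_iff.mpr hσ
    simp only [fp, Sat, List.length_cons, sat_shift]
    constructor
    · intro h; exact ⟨by omega, h⟩
    · rintro ⟨_, h⟩; exact h
  | fin φ ih =>
    intro w σ hσ
    simp only [fp, por, Sat, List.length_cons, ih _ _ hσ]
    constructor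
    · rintro (h | ⟨j, h1, h2, h3⟩)
      · exact ⟨0, by omega, by omega, h⟩
      · exact ⟨j + 1, by omega, by omega, (sat_shift w φ σ j).mpr h3⟩
    · rintro ⟨j, h1, h2, h3⟩
      rcases Nat.eq_zero_or_pos j with rfl | hj
      · exact Or.inl h3
      · obtain ⟨j', rfl⟩ : ∃ j', j = j' + 1 := ⟨j - 1, by omega⟩
        exact Or.inr ⟨j', by omega, by omega, (sat_shift w φ σ j').mp h3⟩
  | glob φ ih =>
    intro w σ hσ
    simp only [fp, pand, Sat, List.length_cons, ih _ _ hσ]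
    constructor
    · rintro ⟨h0, h⟩ j h1 h2
      rcases Nat.eq_zero_or_pos j with rfl | hj
      · exact h0
      · obtain ⟨j', rfl⟩ : ∃ j', j = j' + 1 := ⟨j - 1, by omega⟩
        exact (sat_shift w φ σ j').mpr (h j' (by omega) (by omega))
    · intro h
      refine ⟨h 0 (by omega) (by omega), fun j h1 h2 => ?_⟩
      exact (sat_shift w φ σ j).mp (h (j + 1) (by omega) (by omega))
  | untl φ ψ ih1 ih2 =>
    intro w σ hσ
    simp only [fp, por, pand, Sat, List.length_cons, ih1 _ _ hσ, ih2 _ _ hσ]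
    constructor
    · rintro (h | ⟨h0, j, h1, h2, h3, h4⟩)
      · exact ⟨0, by omega, by omega, h, fun k hk1 hk2 => by omega⟩
      · refine ⟨j + 1, by omega, by omega, (sat_shift w ψ σ j).mpr h3,
          fun k hk1 hk2 => ?_⟩
        rcases Nat.eq_zero_or_pos k with rfl | hk
        · exact h0
        · obtain ⟨k', rfl⟩ : ∃ k', k = k' + 1 := ⟨k - 1, by omega⟩
          exact (sat_shift w φ σ k').mpr (h4 k' (by omega) (by omega))
    · rintro ⟨j, h1, h2, h3, h4⟩
      rcases Nat.eq_zero_or_pos j with rfl | hj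
      · exact Or.inl h3
      · obtain ⟨j', rfl⟩ : ∃ j', j = j' + 1 := ⟨j - 1, by omega⟩
        refine Or.inr ⟨h4 0 (by omega) (by omega),
          j', by omega, by omega, (sat_shift w ψ σ j').mp h3, fun k hk1 hk2 => ?_⟩
        exact (sat_shift w φ σ k).mp (h4 (k + 1) (by omega) (by omega))
  | rels φ ψ ih1 ih2 =>
    intro w σ hσ
    simp only [fp, pand, por, Sat, List.length_cons, ih1 _ _ hσ, ih2 _ _ hσ]
    constructor
    · rintro ⟨h0, h | h⟩ j h1 h2
      · rcases Nat.eq_zero_or_pos j with rfl | hj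
        · exact Or.inl h0
        · exact Or.inr ⟨0, by omega, by omega, h⟩
      · rcases Nat.eq_zero_or_pos j with rfl | hj
        · exact Or.inl h0
        · obtain ⟨j', rfl⟩ : ∃ j', j = j' + 1 := ⟨j - 1, by omega⟩
          rcases h j' (by omega) (by omega) with h3 | ⟨k, hk1, hk2, hk3⟩
          · exact Or.inl ((sat_shift w ψ σ j').mpr h3)
          · exact Or.inr ⟨k + 1, by omega, by omega, (sat_shift w φ σ k).mpr hk3⟩
    · intro h
      have h0 : Sat (w :: σ) 0 ψ := by
        rcases h 0 (by omega) (by omega) with h | ⟨k, hk1, hk2, _⟩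
        · exact h
        · omega
      refine ⟨h0, ?_⟩
      by_cases hφ : Sat (w :: σ) 0 φ
      · exact Or.inl hφ
      · refine Or.inr fun j h1 h2 => ?_
        rcases h (j + 1) (by omega) (by omega) with h3 | ⟨k, hk1, hk2, hk3⟩
        · exact Or.inl ((sat_shift w ψ σ j).mp h3)
        · rcases Nat.eq_zero_or_pos k with rfl | hk
          · exact absurd hk3 hφ
          · obtain ⟨k', rfl⟩ : ∃ k', k = k' + 1 := ⟨k - 1, by omega⟩
            exact Or.inr ⟨k', by omega, by omega, (sat_shift w φ σ k').mp hk3⟩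

theorem fpWord_flag : ∀ (ws : List (P → Bool)) (φ : LTLf P) (w : P → Bool),
    ((fpWord φ w ws).2 = true ↔ Sat (w :: ws) 0 φ) := by
  intro ws
  induction ws with
  | nil => intro φ w; exact fp_flag φ w
  | cons w' ws ih =>
    intro φ w
    rw [fpWord, ih]
    exact fp_form φ w (w' :: ws) (by simp)

theorem foldr_pand_snd (xs : List (LTLf P × Bool)) :
    ((xs.foldr pand (tt, true)).2 = true ↔ ∀ x ∈ xs, x.2 = true) := by
  induction xs with
  | nil => simp
  | cons x xs ih => simp [pand, ih]

theorem fp_foldr_pand (w : P → Bool) (xs : List (LTLf P × Bool)) :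
    fp w (xs.foldr pand (tt, true)).1 =
      (xs.map (fun x => fp w x.1)).foldr pand (tt, true) := by
  induction xs with
  | nil => simp [fp]
  | cons x xs ih =>
    simp only [List.foldr_cons, List.map_cons]
    show fp w (LTLf.and x.1 _) = _
    rw [show fp w (LTLf.and x.1 (xs.foldr pand (tt, true)).1) =
      pand (fp w x.1) (fp w (xs.foldr pand (tt, true)).1) from rfl, ih]

theorem fpWord_foldr : ∀ (ws : List (P → Bool)) (w : P → Bool)
    (xs : List (LTLf P × Bool)),
    ((fpWord (xs.foldr pand (tt, true)).1 w ws).2 = true ↔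
      ∀ x ∈ xs, (fpWord x.1 w ws).2 = true) := by
  intro ws
  induction ws with
  | nil =>
    intro w xs
    show (fp w _).2 = true ↔ _
    rw [fp_foldr_pand, foldr_pand_snd]
    simp only [List.mem_map]
    constructor
    · intro h x hx; exact h _ ⟨x, hx, rfl⟩
    · rintro h _ ⟨x, hx, rfl⟩; exact h x hx
  | cons w' ws ih =>
    intro w xs
    show (fpWord (fp w _).1 w' ws).2 = true ↔ _
    rw [fp_foldr_pand, ih]
    simp only [List.mem_map]
    constructor
    · intro h x hx; exact h _ ⟨x, hx, rfl⟩
    · rintro h _ ⟨x, hx, rfl⟩; exact h x hx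
theorem fpObsWord_flag [Fintype U] [DecidableEq U] :
    ∀ (wos : List (O → Bool)) (φ : LTLf (O ⊕ U)) (wo : O → Bool),
    ((fpObsWord φ wo wos).2 = true ↔
      ∀ (wu : U → Bool) (wus : List (U → Bool)), wus.length = wos.length →
        (fpWord φ (Sum.elim wo wu) (List.zipWith Sum.elim wos wus)).2 = true) := by
  intro wos
  induction wos with
  | nil =>
    intro φ wo
    show (fpObs φ wo).2 = true ↔ _
    rw [fpObs, foldr_pand_snd]
    simp only [List.mem_map]
    constructor
    · intro h wu wus hlen
      obtain rfl : wus = [] := List.eq_nil_of_length_eq_zero hlen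
      exact h _ ⟨wu, Finset.mem_toList.mpr (Finset.mem_univ _), rfl⟩
    · rintro h _ ⟨wu, _, rfl⟩
      exact h wu [] rfl
  | cons w' wos' ih =>
    intro φ wo
    show (fpObsWord (fpObs φ wo).1 w' wos').2 = true ↔ _
    rw [ih]
    constructor
    · intro h wu wus hlen
      match wus with
      | wu' :: wus' =>
        have h2 := h wu' wus' (by simpa using hlen)
        rw [fpObs, fpWord_foldr] at h2
        simp only [List.mem_map] at h2
        exact h2 _ ⟨wu, Finset.mem_toList.mpr (Finset.mem_univ _), rfl⟩
    · intro h wu' wus' hlen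
      rw [fpObs, fpWord_foldr]
      simp only [List.mem_map]
      rintro _ ⟨wu, _, rfl⟩
      exact h wu (wu' :: wus') (by simpa using hlen)

end LTLf

/-- Theorem 1: correctness of the belief-state DFA.  An
observable word `wo :: wos` is accepted (the flag of the iterated observable
progression is `⊤`) iff every full word of the same length whose observable
restriction is `wo :: wos` satisfies `φ` at position `0`. -/
theorem beliefStateDFA_correct {O U : Type} [Fintype O] [DecidableEq O]
    [Fintype U] [DecidableEq U] (φ : LTLf (O ⊕ U)) :
    ∀ (wo : O → Bool) (wos : List (O → Bool)),
      ((LTLf.fpObsWord φ wo wos).2 = true ↔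
        ∀ σ : List ((O ⊕ U) → Bool), σ.length = (wo :: wos).length →
          (∀ j, j < σ.length → ∀ o : O,
            σ.getD j (fun _ => false) (Sum.inl o) =
              (wo :: wos).getD j (fun _ => false) o) →
          LTLf.Sat σ 0 φ) := by
  intro wo wos
  rw [LTLf.fpObsWord_flag]
  constructor
  · -- from flags to all compatible words
    intro h σ hlen hres
    have hlen' : σ.length = wos.length + 1 := by simpa using hlen
    set d : (O ⊕ U) → Bool := fun _ => false with hd
    set wu : U → Bool := fun u => σ.getD 0 d (Sum.inr u) with hwu
    set wus : List (U → Bool) :=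
      (List.range wos.length).map (fun j u => σ.getD (j + 1) d (Sum.inr u)) with hwus
    have hwusl : wus.length = wos.length := by simp [hwus]
    have hσ : σ = Sum.elim wo wu :: List.zipWith Sum.elim wos wus := by
      apply List.ext_getElem
      · simp [hlen', hwusl]
      · intro i h1 h2
        match i with
        | 0 =>
          have h0 : (0 : ℕ) < σ.length := by omega
          funext x
          cases x with
          | inl o =>
            have := hres 0 h0 o
            rw [List.getD_eq_getElem σ d h0] at this
            simpa using this
          | inr u =>
            show σ[0] (Sum.inr u) = wu u
            rw [hwu, List.getD_eq_getElem σ d h0]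
        | j + 1 =>
          have hj : j < wos.length := by
            simp [hwusl] at h2
            omega
          have hj1 : j + 1 < σ.length := by omega
          have hjz : j < (List.zipWith Sum.elim wos wus).length := by
            simp [hwusl]; omega
          rw [List.getElem_cons_succ, List.getElem_zipWith]
          funext x
          cases x with
          | inl o =>
            have := hres (j + 1) hj1 o
            rw [List.getD_eq_getElem σ d hj1, List.getD_cons_succ,
              List.getD_eq_getElem wos _ hj] at this
            simpa using this
          | inr u =>
            show σ[j + 1] (Sum.inr u) = Sum.elim wos[j] wus[j] (Sum.inr u)
            have : wus[j] = fun u => σ.getD (j + 1) d (Sum.inr u) := by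
              simp [hwus]
            rw [this]
            show σ[j + 1] (Sum.inr u) = σ.getD (j + 1) d (Sum.inr u)
            rw [List.getD_eq_getElem σ d hj1]
    rw [hσ]
    rw [← LTLf.fpWord_flag]
    exact h wu wus hwusl
  · intro h wu wus hlen
    rw [LTLf.fpWord_flag]
    set d : (O ⊕ U) → Bool := fun _ => false with hd
    apply h
    · simp [List.length_zipWith, hlen]
    · intro j hj o
      match j with
      | 0 => rfl
      | j + 1 =>
        have hj' : j < wos.length := by
          simp [List.length_zipWith, hlen] at hj
          omega
        have hjz : j < (List.zipWith Sum.elim wos wus).length := by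
          simp [List.length_zipWith, hlen]; omega
        rw [List.getD_cons_succ, List.getD_cons_succ,
          List.getD_eq_getElem _ _ hjz, List.getD_eq_getElem wos _ hj',
          List.getElem_zipWith]
        rfl
end

section
/- Invariant of the belief-state run (key claim in the proof of Theorem 1): let φ be an LTLf formula over P with P = P_o ⊎ P_u, let σ_o ∈ (B^{P_o})^n, and define the run s_0 = φ and s_{k+1} = the formula component of fpObs(s_k, σ_o(k)) for 0 ≤ k < n. Then for every 0 ≤ t < n and every word τ ∈ (B^P)^{n−t} with τ|_{P_o} = σ_o(t..): τ,0 ⊨ s_t if and only if for every sequence (w_u^0, …, w_u^{t−1}) ∈ (B^{P_u})^t, the concatenated word (σ_o(..t−1) ⊔ (w_u^0 ⋯ w_u^{t−1})) · τ satisfies φ at position 0. -/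
/-! Progression is sound one letter at a time: for a nonempty word `τ`, `w :: τ ⊨ φ` iff
`τ ⊨ fp(φ, w)`. Since `fpObs(ψ, w_o)` is the conjunction of `fp(ψ, w_o ⊔ w_u)` over all `w_u`,
`τ ⊨ fpObs(ψ, w_o)` iff `(w_o ⊔ w_u) :: τ ⊨ ψ` for every `w_u`. The invariant then follows by
induction on `t`: the universally quantified last unobservable letter of the completed prefix
is exactly the one absorbed by the last observable progression step. -/

theorem Nat.exists_add_one_le_iff {p : ℕ → Prop} {i : ℕ} :
    (∃ j, i + 1 ≤ j ∧ p j) ↔ ∃ j, i ≤ j ∧ p (j + 1) :=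
  ⟨fun ⟨j, hij, hj⟩ => ⟨j - 1, by omega, by rwa [Nat.sub_add_cancel (by omega)]⟩,
    fun ⟨j, hij, hj⟩ => ⟨j + 1, by omega, hj⟩⟩

theorem Nat.forall_add_one_le_iff {p : ℕ → Prop} {i : ℕ} :
    (∀ j, i + 1 ≤ j → p j) ↔ ∀ j, i ≤ j → p (j + 1) :=
  ⟨fun h j hij => h (j + 1) (by omega),
    fun h j hij => by simpa [Nat.sub_add_cancel (by omega : 1 ≤ j)] using h (j - 1) (by omega)⟩

theorem List.forall_zipWith_take_succ {α β γ : Type*} (f : α → β → γ) {l : List α} {t : ℕ}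
    (ht : t < l.length) (p : List γ → Prop) :
    (∀ bs : List β, bs.length = t + 1 → p (zipWith f (l.take (t + 1)) bs)) ↔
      ∀ b bs, bs.length = t → p (zipWith f (l.take t) bs ++ [f l[t] b]) := by
  have hzip : ∀ b (bs : List β), bs.length = t →
      zipWith f (l.take (t + 1)) (bs ++ [b]) = zipWith f (l.take t) bs ++ [f l[t] b] := by
    intro b bs hbs
    rw [take_succ_eq_append_getElem ht, zipWith_append (by rw [length_take, hbs]; omega)]
    rfl
  constructor
  · intro h b bs hbs
    simpa [hzip b bs hbs] using h (bs ++ [b]) (by simp [hbs])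
  · intro h bs hbs
    obtain ⟨bs, b, rfl⟩ := (eq_nil_or_concat bs).resolve_left (ne_nil_of_length_eq_add_one hbs)
    have hbs : bs.length = t := by simpa using hbs
    simpa [hzip b bs hbs] using h b bs hbs

namespace LTLf

variable {P : Type}

theorem sat_cons_add_one (w : P → Bool) (σ : List (P → Bool)) (φ : LTLf P) (i : ℕ) :
    Sat (w :: σ) (i + 1) φ ↔ Sat σ i φ := by
  induction φ generalizing i <;>
    simp only [Sat, List.length_cons, List.getD_cons_succ, Nat.exists_add_one_le_iff,
      Nat.forall_add_one_le_iff, Nat.add_right_cancel_iff, Nat.add_lt_add_iff_right, *]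

theorem sat_cons_iff_sat_fp (w : P → Bool) {σ : List (P → Bool)} (hσ : σ ≠ []) (φ : LTLf P) :
    Sat (w :: σ) 0 φ ↔ Sat σ 0 (fp w φ).1 := by
  have hlen : 0 < σ.length := List.length_pos_iff.mpr hσ
  induction φ with
  | tt | ff => simp [Sat, fp]
  | atom p => by_cases hp : w p = true <;> simp [Sat, fp, hp]
  | not φ ih => simp [Sat, fp, pnot, ih]
  | and φ ψ ihφ ihψ | or φ ψ ihφ ihψ => simp [Sat, fp, pand, por, ihφ, ihψ]
  | next φ => simp [Sat, fp, sat_cons_add_one, hσ]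
  | snext φ => simp [Sat, fp, sat_cons_add_one, hlen]
  | fin φ ih =>
    simp only [Sat, fp, por, List.length_cons, Nat.zero_le, true_and, Nat.exists_lt_succ_left,
      sat_cons_add_one, ih]
  | glob φ ih =>
    simp only [Sat, fp, pand, List.length_cons, Nat.zero_le, forall_const,
      Nat.forall_lt_succ_left, sat_cons_add_one, ih]
  | untl φ ψ ihφ ihψ =>
    simp only [Sat, fp, por, pand, List.length_cons, Nat.zero_le, true_and, forall_const,
      Nat.exists_lt_succ_left, Nat.forall_lt_succ_left, Nat.not_lt_zero, false_implies,
      and_true, sat_cons_add_one, ihφ, ihψ]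
    exact or_congr_right ⟨fun ⟨j, hj, hψ, hφ, h⟩ => ⟨hφ, j, hj, hψ, h⟩,
      fun ⟨hφ, j, hj, hψ, h⟩ => ⟨j, hj, hψ, hφ, h⟩⟩
  | rels φ ψ ihφ ihψ =>
    simp only [Sat, fp, por, pand, List.length_cons, Nat.zero_le, true_and, forall_const,
      Nat.forall_lt_succ_left, Nat.exists_lt_succ_left, Nat.not_lt_zero, false_and, exists_false,
      or_false, sat_cons_add_one, ihφ, ihψ]
    grind

theorem sat_foldr_pand (τ : List (P → Bool)) (l : List (LTLf P × Bool)) :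
    Sat τ 0 (l.foldr pand (tt, true)).1 ↔ ∀ x ∈ l, Sat τ 0 x.1 := by
  induction l with
  | nil => simp [Sat]
  | cons a l ih => simp [pand, Sat, ih]

theorem sat_fpObs_iff {O U : Type} [Fintype U] [DecidableEq U] {τ : List ((O ⊕ U) → Bool)}
    (hτ : τ ≠ []) (ψ : LTLf (O ⊕ U)) (wo : O → Bool) :
    Sat τ 0 (fpObs ψ wo).1 ↔ ∀ wu : U → Bool, Sat (Sum.elim wo wu :: τ) 0 ψ := by
  simp [fpObs, sat_foldr_pand, sat_cons_iff_sat_fp _ hτ]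

end LTLf

theorem beliefState_run_invariant_general {O U : Type}
    [Fintype U] [DecidableEq U]
    (φ : LTLf (O ⊕ U)) (σo : List (O → Bool)) :
    ∀ t, t < σo.length →
      ∀ τ : List ((O ⊕ U) → Bool), τ.length = σo.length - t →
        (∀ j, j < τ.length → ∀ o : O,
          τ.getD j (fun _ => false) (Sum.inl o) =
            σo.getD (t + j) (fun _ => false) o) →
        (LTLf.Sat τ 0 (LTLf.runB φ σo t) ↔
          ∀ wus : List (U → Bool), wus.length = t →
            LTLf.Sat
              ((List.zipWith (fun wo wu => Sum.elim wo wu) (σo.take t) wus) ++ τ)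
              0 φ) := by
  intro t
  induction t with
  | zero => simp [LTLf.runB]
  | succ t ih =>
    intro ht τ hτlen hτobs
    have ht' : t < σo.length := by omega
    have hτ : τ ≠ [] := List.ne_nil_of_length_pos (by omega)
    rw [LTLf.runB, LTLf.sat_fpObs_iff hτ, List.forall_zipWith_take_succ _ ht'
      (fun u => LTLf.Sat (u ++ τ) 0 φ), List.getD_eq_getElem _ _ ht']
    refine forall_congr' fun wu => ?_
    simp only [List.append_assoc, List.singleton_append]
    refine ih ht' _ (by simp only [List.length_cons]; omega) fun j hj o => ?_
    cases j with
    | zero => simp [List.getElem?_eq_getElem ht']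
    | succ j =>
      simpa [Nat.add_right_comm t 1 j, ← Nat.add_assoc] using hτobs j (by simpa using hj) o

/-- invariant of the belief-state run (key claim of the proof of
Theorem 1).  `runB φ σo t` is the belief state `s_t`; for every `t < n` and
every full word `τ` of length `n - t` whose observable restriction is the
suffix `σo(t..)`, we have `τ,0 ⊨ s_t` iff for every sequence of `t`
unobservable assignments the corresponding completed prefix concatenated with
`τ` satisfies `φ` at position `0`. -/
theorem beliefState_run_invariant {O U : Type} [Fintype O] [DecidableEq O]
    [Fintype U] [DecidableEq U]
    (φ : LTLf (O ⊕ U)) (σo : List (O → Bool)) :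
    ∀ t, t < σo.length →
      ∀ τ : List ((O ⊕ U) → Bool), τ.length = σo.length - t →
        (∀ j, j < τ.length → ∀ o : O,
          τ.getD j (fun _ => false) (Sum.inl o) =
            σo.getD (t + j) (fun _ => false) o) →
        (LTLf.Sat τ 0 (LTLf.runB φ σo t) ↔
          ∀ wus : List (U → Bool), wus.length = t →
            LTLf.Sat
              ((List.zipWith (fun wo wu => Sum.elim wo wu) (σo.take t) wus) ++ τ)
              0 φ) :=
  beliefState_run_invariant_general φ σo
end

section
/- Doubly exponential bound on the belief-state space (Theorem 2 of the paper): let φ be an LTLf formula over P with P = P_o ⊎ P_u, and let Reach^B(φ) = {[φ]_∼} ∪ {[ψ']_∼ : ψ' is the formula component of fpObs(φ, σ_o) for some σ_o ∈ (B^{P_o})^+} be the set of belief states reachable by observable progression, taken modulo propositional equivalence. Then Reach^B(φ) is finite and has cardinality at most 2^(2^n), where n = |sf(φ)|. -/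
/-!
Progression never creates new temporal formulas: `fp w ψ` is a Boolean combination of atoms,
constants and temporal subformulas of `ψ`, and observable progression is a conjunction of such
progressions. Hence every belief state reachable from `φ` lies in the Boolean closure of the set
of atomic and temporal subformulas of `φ`, a set of at most `n = |sf φ|` propositional variables.
The propositional class of a formula in that closure is determined by its truth table over
these variables, and there are at most `2 ^ 2 ^ n` truth tables.
-/

namespace LTLf

variable {P : Type}

lemma mem_sf_self (φ : LTLf P) : φ ∈ sf φ := by
  cases φ <;> simp [sf]

lemma sf_subset_of_mem_sf {φ χ : LTLf P} (h : χ ∈ sf φ) : sf χ ⊆ sf φ := by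
  induction φ with
  | tt | ff | atom _ =>
    simp only [sf, Set.mem_singleton_iff] at h
    rw [h]
  | not _ ih | next _ ih | snext _ ih | fin _ ih | glob _ ih =>
    simp only [sf, Set.mem_insert_iff] at h
    rcases h with rfl | h
    · rfl
    · exact (ih h).trans (Set.subset_insert _ _)
  | and _ _ ih₁ ih₂ | or _ _ ih₁ ih₂ | untl _ _ ih₁ ih₂ | rels _ _ ih₁ ih₂ =>
    simp only [sf, Set.mem_insert_iff, Set.mem_union] at h
    rcases h with rfl | h | h
    · rfl
    · exact (ih₁ h).trans (Set.subset_union_left.trans (Set.subset_insert _ _))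
    · exact (ih₂ h).trans (Set.subset_union_right.trans (Set.subset_insert _ _))

lemma sf_finite (φ : LTLf P) : (sf φ).Finite := by
  induction φ with
  | tt | ff | atom _ => exact Set.finite_singleton _
  | not _ ih | next _ ih | snext _ ih | fin _ ih | glob _ ih => exact ih.insert _
  | and _ _ ih₁ ih₂ | or _ _ ih₁ ih₂ | untl _ _ ih₁ ih₂ | rels _ _ ih₁ ih₂ =>
    exact (ih₁.union ih₂).insert _

/-- All temporal subformulas are included, not only the maximal ones of `φ_P`: progression
exposes nested temporal subformulas. -/
def propVars (φ : LTLf P) : Set (LTLf P) := {χ | χ ∈ sf φ ∧ isAtomicOrTemporal χ}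

lemma propVars_subset_sf (φ : LTLf P) : propVars φ ⊆ sf φ := fun _ h => h.1

namespace BC

variable {φ ψ : LTLf P}

lemma of_sf_subset (h : sf ψ ⊆ sf φ) : BC (propVars φ) ψ := by
  induction ψ with
  | tt => exact tt'
  | ff => exact ff'
  | not _ ih =>
    simp only [sf, Set.insert_subset_iff] at h
    exact not' (ih h.2)
  | and _ _ ih₁ ih₂ =>
    simp only [sf, Set.insert_subset_iff, Set.union_subset_iff] at h
    exact and' (ih₁ h.2.1) (ih₂ h.2.2)
  | or _ _ ih₁ ih₂ =>
    simp only [sf, Set.insert_subset_iff, Set.union_subset_iff] at h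
    exact or' (ih₁ h.2.1) (ih₂ h.2.2)
  | atom _ | next _ _ | snext _ _ | fin _ _ | glob _ _ | untl _ _ _ _ | rels _ _ _ _ =>
    exact base ⟨h (mem_sf_self _), trivial⟩

lemma fp_of_sf_subset (w : P → Bool) (h : sf ψ ⊆ sf φ) : BC (propVars φ) (fp w ψ).1 := by
  induction ψ with
  | tt => exact tt'
  | ff => exact ff'
  | atom p =>
    unfold fp
    split
    exacts [tt', ff']
  | not _ ih =>
    simp only [sf, Set.insert_subset_iff] at h
    exact not' (ih h.2)
  | and _ _ ih₁ ih₂ =>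
    simp only [sf, Set.insert_subset_iff, Set.union_subset_iff] at h
    exact and' (ih₁ h.2.1) (ih₂ h.2.2)
  | or _ _ ih₁ ih₂ =>
    simp only [sf, Set.insert_subset_iff, Set.union_subset_iff] at h
    exact or' (ih₁ h.2.1) (ih₂ h.2.2)
  | next _ _ | snext _ _ =>
    simp only [sf, Set.insert_subset_iff] at h
    exact of_sf_subset h.2
  | fin _ ih =>
    simp only [sf, Set.insert_subset_iff] at h
    exact or' (ih h.2) (base ⟨h.1, trivial⟩)
  | glob _ ih =>
    simp only [sf, Set.insert_subset_iff] at h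
    exact and' (ih h.2) (base ⟨h.1, trivial⟩)
  | untl _ _ ih₁ ih₂ =>
    simp only [sf, Set.insert_subset_iff, Set.union_subset_iff] at h
    exact or' (ih₂ h.2.2) (and' (ih₁ h.2.1) (base ⟨h.1, trivial⟩))
  | rels _ _ ih₁ ih₂ =>
    simp only [sf, Set.insert_subset_iff, Set.union_subset_iff] at h
    exact and' (ih₂ h.2.2) (or' (ih₁ h.2.1) (base ⟨h.1, trivial⟩))

lemma fp (w : P → Bool) (h : BC (propVars φ) ψ) : BC (propVars φ) (LTLf.fp w ψ).1 := by
  induction h with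
  | base hχ => exact fp_of_sf_subset w (sf_subset_of_mem_sf hχ.1)
  | tt' => exact tt'
  | ff' => exact ff'
  | not' _ ih => exact not' ih
  | and' _ _ ih₁ ih₂ => exact and' ih₁ ih₂
  | or' _ _ ih₁ ih₂ => exact or' ih₁ ih₂

lemma foldr_pand {X : Set (LTLf P)} (l : List (LTLf P × Bool)) (hl : ∀ x ∈ l, BC X x.1) :
    BC X (l.foldr pand (tt, true)).1 := by
  induction l with
  | nil => exact tt'
  | cons a l ih =>
    rw [List.forall_mem_cons] at hl
    exact and' hl.1 (ih hl.2)

variable {O U : Type} [Fintype U] [DecidableEq U] {φ ψ : LTLf (O ⊕ U)}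

lemma fpObs (wo : O → Bool) (h : BC (propVars φ) ψ) : BC (propVars φ) (LTLf.fpObs ψ wo).1 :=
  foldr_pand _ <| by
    simp only [List.mem_map]
    rintro _ ⟨wu, -, rfl⟩
    exact h.fp _

lemma fpObsWord (wo : O → Bool) (wos : List (O → Bool)) (h : BC (propVars φ) ψ) :
    BC (propVars φ) (LTLf.fpObsWord ψ wo wos).1 := by
  induction wos generalizing ψ wo with
  | nil => exact h.fpObs wo
  | cons w ws ih => exact ih w (h.fpObs wo)

end BC

section TruthTable

variable {X : Set (LTLf P)}

lemma propEval_congr_of_BC (hX : ∀ χ ∈ X, isAtomicOrTemporal χ) {ψ : LTLf P} (hψ : BC X ψ)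
    {v v' : LTLf P → Bool} (hv : ∀ χ ∈ X, v χ = v' χ) : propEval v ψ = propEval v' ψ := by
  induction hψ with
  | @base χ hχ =>
    have hprop (u : LTLf P → Bool) : propEval u χ = u χ := by
      cases χ <;> first | rfl | exact (hX _ hχ).elim
    rw [hprop, hprop, hv χ hχ]
  | tt' | ff' => rfl
  | not' _ ih => simp only [propEval, ih]
  | and' _ _ ih₁ ih₂ | or' _ _ ih₁ ih₂ => simp only [propEval, ih₁, ih₂]

lemma pcls_eq_of_propEquiv {ψ ψ' : LTLf P} (h : propEquiv ψ ψ') : pcls ψ = pcls ψ' :=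
  Set.ext fun _ => forall_congr' fun v => by rw [h v]

noncomputable def truthTable (X : Set (LTLf P)) (ψ : LTLf P) (v : X → Bool) : Bool :=
  propEval (Function.extend Subtype.val v fun _ => false) ψ

lemma propEval_eq_truthTable (hX : ∀ χ ∈ X, isAtomicOrTemporal χ) {ψ : LTLf P} (hψ : BC X ψ)
    (v : LTLf P → Bool) : propEval v ψ = truthTable X ψ (v ∘ Subtype.val) :=
  propEval_congr_of_BC hX hψ fun χ hχ =>
    (Subtype.val_injective.extend_apply (v ∘ Subtype.val) _ ⟨χ, hχ⟩).symm

lemma pcls_eq_of_truthTable_eq (hX : ∀ χ ∈ X, isAtomicOrTemporal χ) {ψ ψ' : LTLf P}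
    (hψ : BC X ψ) (hψ' : BC X ψ') (h : truthTable X ψ = truthTable X ψ') :
    pcls ψ = pcls ψ' :=
  pcls_eq_of_propEquiv fun v => by
    rw [propEval_eq_truthTable hX hψ, h, ← propEval_eq_truthTable hX hψ']

theorem finite_pcls_BC_and_ncard_le (hXfin : X.Finite) (hX : ∀ χ ∈ X, isAtomicOrTemporal χ) :
    (pcls '' {ψ | BC X ψ}).Finite ∧ (pcls '' {ψ | BC X ψ}).ncard ≤ 2 ^ 2 ^ X.ncard := by
  have : Finite X := hXfin.to_subtype
  have : Nonempty (LTLf P) := ⟨tt⟩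
  let g (t : (X → Bool) → Bool) : Set (LTLf P) :=
    pcls (Function.invFunOn (truthTable X) {ψ | BC X ψ} t)
  have hsub : pcls '' {ψ | BC X ψ} ⊆ g '' Set.univ := by
    rintro _ ⟨ψ, hψ, rfl⟩
    have hex : ∃ ψ' ∈ {ψ | BC X ψ}, truthTable X ψ' = truthTable X ψ := ⟨ψ, hψ, rfl⟩
    exact ⟨_, trivial, pcls_eq_of_truthTable_eq hX (Function.invFunOn_mem hex) hψ
      (Function.invFunOn_eq hex)⟩
  have hfin : (g '' Set.univ).Finite := Set.toFinite _
  refine ⟨hfin.subset hsub, ?_⟩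
  calc (pcls '' {ψ | BC X ψ}).ncard
      ≤ (g '' Set.univ).ncard := Set.ncard_le_ncard hsub hfin
    _ ≤ (Set.univ : Set ((X → Bool) → Bool)).ncard := Set.ncard_image_le Set.finite_univ
    _ = 2 ^ 2 ^ X.ncard := by simp [Set.ncard_univ, Nat.card_fun, Nat.card_coe_set_eq]

end TruthTable

end LTLf

theorem beliefState_card_le_general {O U : Type}
    [Fintype U] [DecidableEq U] (φ : LTLf (O ⊕ U)) :
    Set.Finite {s : Set (LTLf (O ⊕ U)) | s = LTLf.pcls φ ∨
        ∃ (wo : O → Bool) (wos : List (O → Bool)),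
          s = LTLf.pcls (LTLf.fpObsWord φ wo wos).1} ∧
      Set.ncard {s : Set (LTLf (O ⊕ U)) | s = LTLf.pcls φ ∨
        ∃ (wo : O → Bool) (wos : List (O → Bool)),
          s = LTLf.pcls (LTLf.fpObsWord φ wo wos).1} ≤
        2 ^ 2 ^ (LTLf.sf φ).ncard := by
  have hφ : LTLf.BC φ.propVars φ := .of_sf_subset le_rfl
  have hreach : {s | s = φ.pcls ∨ ∃ wo wos, s = (φ.fpObsWord wo wos).1.pcls} ⊆
      LTLf.pcls '' {ψ | LTLf.BC φ.propVars ψ} := by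
    rintro s (rfl | ⟨wo, wos, rfl⟩)
    exacts [⟨φ, hφ, rfl⟩, ⟨_, hφ.fpObsWord wo wos, rfl⟩]
  have hsub := φ.propVars_subset_sf
  obtain ⟨hfin, hcard⟩ :=
    LTLf.finite_pcls_BC_and_ncard_le (φ.sf_finite.subset hsub) fun _ hχ => hχ.2
  refine ⟨hfin.subset hreach, ?_⟩
  calc _ ≤ (LTLf.pcls '' {ψ | LTLf.BC φ.propVars ψ}).ncard := Set.ncard_le_ncard hreach hfin
    _ ≤ 2 ^ 2 ^ φ.propVars.ncard := hcard
    _ ≤ 2 ^ 2 ^ φ.sf.ncard := Nat.pow_le_pow_right two_pos <| Nat.pow_le_pow_right two_pos <|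
      Set.ncard_le_ncard hsub φ.sf_finite

/-- Theorem 2: doubly exponential bound on the belief-state
space reachable by observable progression, modulo propositional equivalence. -/
theorem beliefState_card_le {O U : Type} [Fintype O] [DecidableEq O]
    [Fintype U] [DecidableEq U] (φ : LTLf (O ⊕ U)) :
    Set.Finite {s : Set (LTLf (O ⊕ U)) | s = LTLf.pcls φ ∨
        ∃ (wo : O → Bool) (wos : List (O → Bool)),
          s = LTLf.pcls (LTLf.fpObsWord φ wo wos).1} ∧
      Set.ncard {s : Set (LTLf (O ⊕ U)) | s = LTLf.pcls φ ∨
        ∃ (wo : O → Bool) (wos : List (O → Bool)),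
          s = LTLf.pcls (LTLf.fpObsWord φ wo wos).1} ≤
        2 ^ 2 ^ (LTLf.sf φ).ncard :=
  beliefState_card_le_general φ
end
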